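/- On ℝ^{2N} let 𝔏 be the Lie algebra of vector fields generated by X_1 = ∂_{p_1}, X_N = ∂_{p_N} together with iterated brackets with X_0 = 𝒜 - (1/2)(p_1∂_{p_1} + p_N∂_{p_N}), where 𝒜 is the Hamiltonian vector field of H(q,p) = ∑((1/2)p_i² + V(q_i)) + ∑ U(q_{i+1}-q_i), and suppose U is non-degenerate: for every q ∈ ℝ there exists m ≥ 2 with U^{(m)}(q) ≠ 0. Then 𝔏 has full rank 2N at every point, i.e., 𝔏 contains ∂_{p_i} and ∂_{q_i} for all 1 ≤ i ≤ N at every point of ℝ^{2N}. -/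

import Mathlib

open scoped ContDiff

/-- Lie bracket of vector fields on a normed space. -/
noncomputable def lieBracketVF {E : Type*} [NormedAddCommGroup E] [NormedSpace ℝ E]
    (f g : E → E) : E → E :=
  fun x => fderiv ℝ g x (f x) - fderiv ℝ f x (g x)

/-- The Lie algebra of vector fields generated by a set `S` together with the iterated
brackets with the drift field `X₀` (Hörmander's bracket-generating family). -/
inductive GenLie {E : Type*} [NormedAddCommGroup E] [NormedSpace ℝ E]
    (X₀ : E → E) (S : Set (E → E)) : (E → E) → Prop
  | base {f} (hf : f ∈ S) : GenLie X₀ S f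
  | smul (c : ℝ) {f} (hf : GenLie X₀ S f) : GenLie X₀ S (fun x => c • f x)
  | add {f g} (hf : GenLie X₀ S f) (hg : GenLie X₀ S g) : GenLie X₀ S (fun x => f x + g x)
  | lie {f g} (hf : GenLie X₀ S f) (hg : GenLie X₀ S g) : GenLie X₀ S (lieBracketVF f g)
  | lie₀ {f} (hf : GenLie X₀ S f) : GenLie X₀ S (lieBracketVF X₀ f)


lemma lieBracketVF_contDiff {E : Type*} [NormedAddCommGroup E] [NormedSpace ℝ E]
    {f g : E → E} (hf : ContDiff ℝ ∞ f) (hg : ContDiff ℝ ∞ g) :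
    ContDiff ℝ ∞ (lieBracketVF f g) :=
  ((hg.fderiv_right (by rfl)).clm_apply hf).sub ((hf.fderiv_right (by rfl)).clm_apply hg)

lemma fderiv_eval_zero {E : Type*} [NormedAddCommGroup E] [NormedSpace ℝ E]
    {f : E → ℝ} (h : ∀ y, f y = 0) (x : E) (w : E) : fderiv ℝ f x w = 0 := by
  have : f = fun _ => (0 : ℝ) := funext h
  rw [this, fderiv_fun_const]
  simp
section X0
variable {N : ℕ} {U V : ℝ → ℝ} {force : (Fin N → ℝ) → Fin N → ℝ}
  {X₀ : ((Fin N → ℝ) × (Fin N → ℝ)) → ((Fin N → ℝ) × (Fin N → ℝ))}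
local notation "EE" => ((Fin N → ℝ) × (Fin N → ℝ))

noncomputable def pQ (i : Fin N) : ((Fin N → ℝ) × (Fin N → ℝ)) →L[ℝ] ℝ :=
  (ContinuousLinearMap.proj i).comp (ContinuousLinearMap.fst ℝ _ _)

noncomputable def pP (i : Fin N) : ((Fin N → ℝ) × (Fin N → ℝ)) →L[ℝ] ℝ :=
  (ContinuousLinearMap.proj i).comp (ContinuousLinearMap.snd ℝ _ _)

@[simp] lemma pQ_apply (i : Fin N) (x : (Fin N → ℝ) × (Fin N → ℝ)) : pQ i x = x.1 i := rfl
@[simp] lemma pP_apply (i : Fin N) (x : (Fin N → ℝ) × (Fin N → ℝ)) : pP i x = x.2 i := rfl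

lemma X0_eq (hforce : ∀ q i, force q i = deriv V (q i)
        + (if 1 ≤ i.1 then deriv U (q i - q ⟨i.1 - 1, (by have := i.isLt; omega : i.1 - 1 < N + 0)⟩) else 0)
        - (if h : i.1 + 1 < N then deriv U (q ⟨i.1 + 1, h⟩ - q i) else 0))
    (hX₀ : ∀ x, X₀ x = (x.2, fun i => -force x.1 i
        - (if i.1 = 0 ∨ i.1 = N - 1 then (1/2) * x.2 i else 0))) :
    X₀ = fun x => (x.2, fun i =>
      -(deriv V (x.1 i)
        + (if 1 ≤ i.1 then deriv U (x.1 i - x.1 ⟨i.1 - 1, (by have := i.isLt; omega : i.1 - 1 < N + 0)⟩) else 0)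
        - (if h : i.1 + 1 < N then deriv U (x.1 ⟨i.1 + 1, h⟩ - x.1 i) else 0))
      - (if i.1 = 0 ∨ i.1 = N - 1 then (1/2) * x.2 i else 0)) := by
  funext x
  rw [hX₀ x]
  refine Prod.ext rfl ?_
  show (fun i => -force x.1 i - _) = _
  funext i
  show -force x.1 i - _ = _
  rw [hforce x.1 i]

lemma X0_contDiff (hU : ContDiff ℝ ∞ (deriv U)) (hV : ContDiff ℝ ∞ (deriv V))
    (hforce : ∀ q i, force q i = deriv V (q i)
        + (if 1 ≤ i.1 then deriv U (q i - q ⟨i.1 - 1, (by have := i.isLt; omega : i.1 - 1 < N + 0)⟩) else 0)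
        - (if h : i.1 + 1 < N then deriv U (q ⟨i.1 + 1, h⟩ - q i) else 0))
    (hX₀ : ∀ x, X₀ x = (x.2, fun i => -force x.1 i
        - (if i.1 = 0 ∨ i.1 = N - 1 then (1/2) * x.2 i else 0))) :
    ContDiff ℝ ∞ X₀ := by
  rw [X0_eq hforce hX₀]
  refine ContDiff.prodMk contDiff_snd (contDiff_pi.mpr fun i => ContDiff.sub ?_ ?_)
  · refine ContDiff.neg (ContDiff.sub (ContDiff.add ?_ ?_) ?_)
    · exact hV.comp (pQ i).contDiff
    · by_cases h1 : 1 ≤ i.1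
      · simp only [if_pos h1]
        exact hU.comp ((pQ i).contDiff.sub (pQ ⟨i.1 - 1, (by have := i.isLt; omega : i.1 - 1 < N + 0)⟩).contDiff)
      · simp only [if_neg h1]; exact contDiff_const
    · by_cases h2 : i.1 + 1 < N
      · simp only [dif_pos h2]
        exact hU.comp ((pQ ⟨i.1 + 1, h2⟩).contDiff.sub (pQ i).contDiff)
      · simp only [dif_neg h2]; exact contDiff_const
  · by_cases h3 : i.1 = 0 ∨ i.1 = N - 1
    · simp only [if_pos h3]
      exact ContDiff.mul contDiff_const ((pP i).contDiff)
    · simp only [if_neg h3]; exact contDiff_const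
end X0

section rows
variable {N : ℕ} {U V : ℝ → ℝ} {force : (Fin N → ℝ) → Fin N → ℝ}
  {X₀ : ((Fin N → ℝ) × (Fin N → ℝ)) → ((Fin N → ℝ) × (Fin N → ℝ))}
local notation "EE" => ((Fin N → ℝ) × (Fin N → ℝ))

lemma hle1inf : (∞ : WithTop ℕ∞) ≠ 0 := by simp

lemma fderiv_clm_comp_apply' {E F : Type*} [NormedAddCommGroup E] [NormedSpace ℝ E]
    [NormedAddCommGroup F] [NormedSpace ℝ F]
    (l : F →L[ℝ] ℝ) {f : E → F} {x : E} (hf : DifferentiableAt ℝ f x) (w : E) :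
    fderiv ℝ (fun y => l (f y)) x w = l (fderiv ℝ f x w) := by
  rw [show (fun y => l (f y)) = l ∘ f from rfl, fderiv_comp x l.differentiableAt hf,
    ContinuousLinearMap.fderiv]
  rfl

lemma X0_rowq (hU : ContDiff ℝ ∞ (deriv U)) (hV : ContDiff ℝ ∞ (deriv V))
    (hforce : ∀ q i, force q i = deriv V (q i)
        + (if 1 ≤ i.1 then deriv U (q i - q ⟨i.1 - 1, (by have := i.isLt; omega : i.1 - 1 < N + 0)⟩) else 0)
        - (if h : i.1 + 1 < N then deriv U (q ⟨i.1 + 1, h⟩ - q i) else 0))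
    (hX₀ : ∀ x, X₀ x = (x.2, fun i => -force x.1 i
        - (if i.1 = 0 ∨ i.1 = N - 1 then (1/2) * x.2 i else 0)))
    (x w : EE) (i : Fin N) :
    (fderiv ℝ X₀ x w).1 i = w.2 i := by
  have hX0d : DifferentiableAt ℝ X₀ x :=
    ((X0_contDiff hU hV hforce hX₀).differentiable hle1inf).differentiableAt
  rw [show ((fderiv ℝ X₀ x) w).1 i = pQ i ((fderiv ℝ X₀ x) w) from rfl,
    ← fderiv_clm_comp_apply' (pQ i) hX0d w]
  have hfun : (fun y : EE => pQ i (X₀ y)) = fun y : EE => pP i y := by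
    funext y; rw [hX₀ y]; rfl
  rw [hfun]
  rw [(pP i).fderiv]
  rfl

lemma X0_rowp (hU : ContDiff ℝ ∞ (deriv U)) (hV : ContDiff ℝ ∞ (deriv V))
    (hforce : ∀ q i, force q i = deriv V (q i)
        + (if 1 ≤ i.1 then deriv U (q i - q ⟨i.1 - 1, (by have := i.isLt; omega : i.1 - 1 < N + 0)⟩) else 0)
        - (if h : i.1 + 1 < N then deriv U (q ⟨i.1 + 1, h⟩ - q i) else 0))
    (hX₀ : ∀ x, X₀ x = (x.2, fun i => -force x.1 i
        - (if i.1 = 0 ∨ i.1 = N - 1 then (1/2) * x.2 i else 0)))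
    (x w : EE) (i : Fin N) (hi : 1 ≤ i.1) :
    (fderiv ℝ X₀ x w).2 i =
      -(deriv (deriv V) (x.1 i) * w.1 i)
      - iteratedDeriv 2 U (x.1 i - x.1 ⟨i.1 - 1, (by have := i.isLt; omega : i.1 - 1 < N + 0)⟩)
          * (w.1 i - w.1 ⟨i.1 - 1, (by have := i.isLt; omega : i.1 - 1 < N + 0)⟩)
      + (if h : i.1 + 1 < N then
          iteratedDeriv 2 U (x.1 ⟨i.1 + 1, h⟩ - x.1 i) * (w.1 ⟨i.1 + 1, h⟩ - w.1 i) else 0)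
      - (if i.1 = 0 ∨ i.1 = N - 1 then (1/2) * w.2 i else 0) := by
  have h2U : iteratedDeriv 2 U = deriv (deriv U) := by
    rw [iteratedDeriv_succ, iteratedDeriv_one]
  have hX0d : DifferentiableAt ℝ X₀ x :=
    ((X0_contDiff hU hV hforce hX₀).differentiable hle1inf).differentiableAt
  rw [show ((fderiv ℝ X₀ x) w).2 i = pP i ((fderiv ℝ X₀ x) w) from rfl,
    ← fderiv_clm_comp_apply' (pP i) hX0d w]
  set im : Fin N := ⟨i.1 - 1, (by have := i.isLt; omega : i.1 - 1 < N + 0)⟩ with him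
  have hfun : (fun y : EE => pP i (X₀ y)) = fun y : EE =>
      -(deriv V (y.1 i) + deriv U (y.1 i - y.1 im)
        - (if h : i.1 + 1 < N then deriv U (y.1 ⟨i.1 + 1, h⟩ - y.1 i) else 0))
      - (if i.1 = 0 ∨ i.1 = N - 1 then (1/2) * y.2 i else 0) := by
    funext y
    show (X₀ y).2 i = _
    rw [hX₀ y]
    show -force y.1 i - _ = _
    rw [hforce y.1 i, if_pos hi]
  rw [hfun]
  -- build HasFDerivAt
  have hPq : ∀ j : Fin N, HasFDerivAt (fun y : EE => y.1 j) (pQ j) x := fun j => (pQ j).hasFDerivAt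
  have hPp : HasFDerivAt (fun y : EE => y.2 i) (pP i) x := (pP i).hasFDerivAt
  have hdV : HasDerivAt (deriv V) (deriv (deriv V) (x.1 i)) (x.1 i) :=
    ((hV.differentiable hle1inf) (x.1 i)).hasDerivAt
  have hdU : ∀ t : ℝ, HasDerivAt (deriv U) (iteratedDeriv 2 U t) t := fun t => by
    rw [h2U]; exact ((hU.differentiable hle1inf) t).hasDerivAt
  have h1 : HasFDerivAt (fun y : EE => deriv V (y.1 i))
      (deriv (deriv V) (x.1 i) • pQ i) x := hdV.comp_hasFDerivAt (f := fun y : EE => y.1 i) x (hPq i)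
  have h2 : HasFDerivAt (fun y : EE => deriv U (y.1 i - y.1 im))
      (iteratedDeriv 2 U (x.1 i - x.1 im) • (pQ i - pQ im)) x :=
    (hdU _).comp_hasFDerivAt x ((hPq i).sub (hPq im))
  have h3 : HasFDerivAt (fun y : EE => if h : i.1 + 1 < N then deriv U (y.1 ⟨i.1 + 1, h⟩ - y.1 i) else 0)
      (if h : i.1 + 1 < N then
        iteratedDeriv 2 U (x.1 ⟨i.1 + 1, h⟩ - x.1 i) • (pQ ⟨i.1 + 1, h⟩ - pQ i) else 0) x := by
    by_cases h : i.1 + 1 < N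
    · simp only [dif_pos h]
      exact (hdU _).comp_hasFDerivAt x ((hPq ⟨i.1 + 1, h⟩).sub (hPq i))
    · simp only [dif_neg h]
      exact hasFDerivAt_const 0 x
  have h4 : HasFDerivAt (fun y : EE => if i.1 = 0 ∨ i.1 = N - 1 then (1/2 : ℝ) * y.2 i else 0)
      (if i.1 = 0 ∨ i.1 = N - 1 then (1/2 : ℝ) • pP i else 0) x := by
    by_cases h : i.1 = 0 ∨ i.1 = N - 1
    · simp only [if_pos h]
      exact hPp.const_mul _
    · simp only [if_neg h]
      exact hasFDerivAt_const 0 x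
  have H := (((h1.add h2).sub h3).neg).sub h4
  erw [H.fderiv]
  by_cases hc2 : i.1 + 1 < N <;> by_cases hc3 : i.1 = 0 ∨ i.1 = N - 1 <;>
    simp only [dif_pos, dif_neg, if_pos, if_neg, hc2, hc3, if_true, if_false, dite_true,
      dite_false, ContinuousLinearMap.sub_apply, ContinuousLinearMap.add_apply,
      ContinuousLinearMap.neg_apply, ContinuousLinearMap.smul_apply,
      ContinuousLinearMap.zero_apply, pQ_apply, pP_apply, smul_eq_mul] <;>
    ring

lemma fderiv_fst_apply {f : ((Fin N → ℝ) × (Fin N → ℝ)) → ((Fin N → ℝ) × (Fin N → ℝ))} {x : (Fin N → ℝ) × (Fin N → ℝ)}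
    (hf : DifferentiableAt ℝ f x) (i : Fin N) (w : (Fin N → ℝ) × (Fin N → ℝ)) :
    fderiv ℝ (fun y => (f y).1 i) x w = (fderiv ℝ f x w).1 i :=
  fderiv_clm_comp_apply' (pQ i) hf w

lemma fderiv_snd_apply {f : ((Fin N → ℝ) × (Fin N → ℝ)) → ((Fin N → ℝ) × (Fin N → ℝ))} {x : (Fin N → ℝ) × (Fin N → ℝ)}
    (hf : DifferentiableAt ℝ f x) (i : Fin N) (w : (Fin N → ℝ) × (Fin N → ℝ)) :
    fderiv ℝ (fun y => (f y).2 i) x w = (fderiv ℝ f x w).2 i :=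
  fderiv_clm_comp_apply' (pP i) hf w

lemma lieBracketVF_fst_apply {f g : ((Fin N → ℝ) × (Fin N → ℝ)) → ((Fin N → ℝ) × (Fin N → ℝ))}
    {x : (Fin N → ℝ) × (Fin N → ℝ)} (hf : DifferentiableAt ℝ f x) (hg : DifferentiableAt ℝ g x) (i : Fin N) :
    (lieBracketVF f g x).1 i
      = fderiv ℝ (fun y => (g y).1 i) x (f x) - fderiv ℝ (fun y => (f y).1 i) x (g x) := by
  rw [fderiv_fst_apply hg, fderiv_fst_apply hf]
  rfl

lemma lieBracketVF_snd_apply {f g : ((Fin N → ℝ) × (Fin N → ℝ)) → ((Fin N → ℝ) × (Fin N → ℝ))}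
    {x : (Fin N → ℝ) × (Fin N → ℝ)} (hf : DifferentiableAt ℝ f x) (hg : DifferentiableAt ℝ g x) (i : Fin N) :
    (lieBracketVF f g x).2 i
      = fderiv ℝ (fun y => (g y).2 i) x (f x) - fderiv ℝ (fun y => (f y).2 i) x (g x) := by
  rw [fderiv_snd_apply hg, fderiv_snd_apply hf]
  rfl

end rows


section props
variable {N : ℕ} {U V : ℝ → ℝ} {force : (Fin N → ℝ) → Fin N → ℝ}
  {X₀ : ((Fin N → ℝ) × (Fin N → ℝ)) → ((Fin N → ℝ) × (Fin N → ℝ))}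
local notation "EE" => ((Fin N → ℝ) × (Fin N → ℝ))

variable (hU : ContDiff ℝ ∞ (deriv U)) (hV : ContDiff ℝ ∞ (deriv V))
    (hforce : ∀ q i, force q i = deriv V (q i)
        + (if 1 ≤ i.1 then deriv U (q i - q ⟨i.1 - 1, (by have := i.isLt; omega : i.1 - 1 < N + 0)⟩) else 0)
        - (if h : i.1 + 1 < N then deriv U (q ⟨i.1 + 1, h⟩ - q i) else 0))
    (hX₀ : ∀ x, X₀ x = (x.2, fun i => -force x.1 i
        - (if i.1 = 0 ∨ i.1 = N - 1 then (1/2) * x.2 i else 0)))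

include hU hV hforce hX₀

lemma Bprops {k : ℕ} (hk : k < N) {A : EE → EE} (hA : ContDiff ℝ ∞ A)
    (hA1 : ∀ (y : EE) (i : Fin N), k ≤ i.1 → (A y).1 i = 0)
    (hA2 : ∀ (y : EE) (i : Fin N), k < i.1 → (A y).2 i = 0) :
    (∀ (y : EE) (i : Fin N), k < i.1 → (lieBracketVF X₀ A y).1 i = 0) ∧
    (∀ y : EE, (lieBracketVF X₀ A y).1 ⟨k, hk⟩ = -((A y).2 ⟨k, hk⟩)) ∧
    (∀ (y : EE) (i : Fin N), k < i.1 → (lieBracketVF X₀ A y).2 i = 0) := by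
  have hX0s : ContDiff ℝ ∞ X₀ := X0_contDiff hU hV hforce hX₀
  have hX0d : ∀ y : EE, DifferentiableAt ℝ X₀ y :=
    fun y => ((hX0s.differentiable hle1inf) y)
  have hAd : ∀ y : EE, DifferentiableAt ℝ A y := fun y => ((hA.differentiable hle1inf) y)
  refine ⟨?_, ?_, ?_⟩
  · intro y i hi
    rw [lieBracketVF_fst_apply (hX0d y) (hAd y) i]
    rw [fderiv_eval_zero (fun z => hA1 z i (le_of_lt hi)),
      fderiv_fst_apply (hX0d y) i (A y), X0_rowq hU hV hforce hX₀ y (A y) i,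
      hA2 y i hi]
    ring
  · intro y
    rw [lieBracketVF_fst_apply (hX0d y) (hAd y) _]
    rw [fderiv_eval_zero (fun z => hA1 z ⟨k, hk⟩ le_rfl),
      fderiv_fst_apply (hX0d y) _ (A y), X0_rowq hU hV hforce hX₀ y (A y) _]
    ring
  · intro y i hi
    have hi1 : 1 ≤ i.1 := by omega
    rw [lieBracketVF_snd_apply (hX0d y) (hAd y) i]
    rw [fderiv_eval_zero (fun z => hA2 z i hi),
      fderiv_snd_apply (hX0d y) i (A y), X0_rowp hU hV hforce hX₀ y (A y) i hi1]
    rw [hA1 y i (le_of_lt hi), hA1 y ⟨i.1 - 1, (by have := i.isLt; omega : i.1 - 1 < N + 0)⟩ (by simp; omega),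
      hA2 y i hi]
    have h3 : (if h : i.1 + 1 < N then
        iteratedDeriv 2 U (y.1 ⟨i.1 + 1, h⟩ - y.1 i) * ((A y).1 ⟨i.1 + 1, h⟩ - (A y).1 i) else 0)
        = 0 := by
      by_cases h : i.1 + 1 < N
      · rw [dif_pos h, hA1 y ⟨i.1 + 1, h⟩ (by simp; omega), hA1 y i (le_of_lt hi)]; ring
      · rw [dif_neg h]
    rw [hA1 y i (le_of_lt hi)] at h3
    rw [h3]
    by_cases h4 : i.1 = 0 ∨ i.1 = N - 1
    · rw [if_pos h4]; ring
    · rw [if_neg h4]; ring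
end props

section props2
variable {N : ℕ} {U V : ℝ → ℝ} {force : (Fin N → ℝ) → Fin N → ℝ}
  {X₀ : ((Fin N → ℝ) × (Fin N → ℝ)) → ((Fin N → ℝ) × (Fin N → ℝ))}
local notation "EE" => ((Fin N → ℝ) × (Fin N → ℝ))

lemma Cstep {k : ℕ} {B C : EE → EE} (hBs : ContDiff ℝ ∞ B) (hCs : ContDiff ℝ ∞ C)
    (hB1 : ∀ (y : EE) (i : Fin N), k < i.1 → (B y).1 i = 0)
    (hB2 : ∀ (y : EE) (i : Fin N), k < i.1 → (B y).2 i = 0)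
    (hC1 : ∀ (y : EE) (i : Fin N), k < i.1 → (C y).1 i = 0)
    (hC2 : ∀ (y : EE) (i : Fin N), k + 1 < i.1 → (C y).2 i = 0) :
    (∀ (y : EE) (i : Fin N), k < i.1 → (lieBracketVF B C y).1 i = 0) ∧
    (∀ (y : EE) (i : Fin N), k + 1 < i.1 → (lieBracketVF B C y).2 i = 0) ∧
    (∀ (y : EE) (hk1 : k + 1 < N), (lieBracketVF B C y).2 ⟨k + 1, hk1⟩
      = fderiv ℝ (fun z => (C z).2 ⟨k + 1, hk1⟩) y (B y)) := by
  have hBd : ∀ y : EE, DifferentiableAt ℝ B y := fun y => (hBs.differentiable hle1inf) y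
  have hCd : ∀ y : EE, DifferentiableAt ℝ C y := fun y => (hCs.differentiable hle1inf) y
  refine ⟨?_, ?_, ?_⟩
  · intro y i hi
    rw [lieBracketVF_fst_apply (hBd y) (hCd y) i,
      fderiv_eval_zero (fun z => hC1 z i hi), fderiv_eval_zero (fun z => hB1 z i hi)]
    ring
  · intro y i hi
    rw [lieBracketVF_snd_apply (hBd y) (hCd y) i,
      fderiv_eval_zero (fun z => hC2 z i hi),
      fderiv_eval_zero (fun z => hB2 z i (by omega))]
    ring
  · intro y hk1
    rw [lieBracketVF_snd_apply (hBd y) (hCd y) _,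
      fderiv_eval_zero (fun z => hB2 z ⟨k + 1, hk1⟩ (Nat.lt_succ_self k))]
    ring

variable (hU : ContDiff ℝ ∞ (deriv U)) (hV : ContDiff ℝ ∞ (deriv V))
    (hforce : ∀ q i, force q i = deriv V (q i)
        + (if 1 ≤ i.1 then deriv U (q i - q ⟨i.1 - 1, (by have := i.isLt; omega : i.1 - 1 < N + 0)⟩) else 0)
        - (if h : i.1 + 1 < N then deriv U (q ⟨i.1 + 1, h⟩ - q i) else 0))
    (hX₀ : ∀ x, X₀ x = (x.2, fun i => -force x.1 i
        - (if i.1 = 0 ∨ i.1 = N - 1 then (1/2) * x.2 i else 0)))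

include hU hV hforce hX₀

lemma Cfirst {k : ℕ} (hk1 : k + 1 < N) {B : EE → EE} (hBs : ContDiff ℝ ∞ B)
    (hB1 : ∀ (y : EE) (i : Fin N), k < i.1 → (B y).1 i = 0)
    (hB2 : ∀ (y : EE) (i : Fin N), k < i.1 → (B y).2 i = 0) :
    (∀ (y : EE) (i : Fin N), k < i.1 → (lieBracketVF X₀ B y).1 i = 0) ∧
    (∀ (y : EE) (i : Fin N), k + 1 < i.1 → (lieBracketVF X₀ B y).2 i = 0) ∧
    (∀ y : EE, (lieBracketVF X₀ B y).2 ⟨k + 1, hk1⟩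
      = -(iteratedDeriv 2 U (y.1 ⟨k + 1, hk1⟩ - y.1 ⟨k, by omega⟩)
          * (B y).1 ⟨k, by omega⟩)) := by
  have hX0s : ContDiff ℝ ∞ X₀ := X0_contDiff hU hV hforce hX₀
  have hX0d : ∀ y : EE, DifferentiableAt ℝ X₀ y := fun y => (hX0s.differentiable hle1inf) y
  have hBd : ∀ y : EE, DifferentiableAt ℝ B y := fun y => (hBs.differentiable hle1inf) y
  refine ⟨?_, ?_, ?_⟩
  · intro y i hi
    rw [lieBracketVF_fst_apply (hX0d y) (hBd y) i,
      fderiv_eval_zero (fun z => hB1 z i hi),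
      fderiv_fst_apply (hX0d y) i (B y), X0_rowq hU hV hforce hX₀ y (B y) i,
      hB2 y i hi]
    ring
  · intro y i hi
    have hi1 : 1 ≤ i.1 := by omega
    rw [lieBracketVF_snd_apply (hX0d y) (hBd y) i,
      fderiv_eval_zero (fun z => hB2 z i (by omega)),
      fderiv_snd_apply (hX0d y) i (B y), X0_rowp hU hV hforce hX₀ y (B y) i hi1,
      hB1 y i (by omega), hB1 y ⟨i.1 - 1, (by have := i.isLt; omega : i.1 - 1 < N + 0)⟩ (by simp; omega),
      hB2 y i (by omega)]
    have h3 : (if h : i.1 + 1 < N then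
        iteratedDeriv 2 U (y.1 ⟨i.1 + 1, h⟩ - y.1 i) * ((B y).1 ⟨i.1 + 1, h⟩ - 0) else 0)
        = 0 := by
      by_cases h : i.1 + 1 < N
      · rw [dif_pos h, hB1 y ⟨i.1 + 1, h⟩ (by simp; omega)]; ring
      · rw [dif_neg h]
    rw [h3]
    by_cases h4 : i.1 = 0 ∨ i.1 = N - 1
    · rw [if_pos h4]; ring
    · rw [if_neg h4]; ring
  · intro y
    rw [lieBracketVF_snd_apply (hX0d y) (hBd y) _,
      fderiv_eval_zero (fun z => hB2 z ⟨k + 1, hk1⟩ (Nat.lt_succ_self k)),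
      fderiv_snd_apply (hX0d y) _ (B y),
      X0_rowp hU hV hforce hX₀ y (B y) ⟨k + 1, hk1⟩ (by simp),
      hB1 y ⟨k + 1, hk1⟩ (by simp)]
    have him : (⟨(⟨k + 1, hk1⟩ : Fin N).1 - 1, by omega⟩ : Fin N) = ⟨k, by omega⟩ := by
      apply Fin.ext; simp
    rw [him]
    have h3 : (if h : (⟨k + 1, hk1⟩ : Fin N).1 + 1 < N then
        iteratedDeriv 2 U (y.1 ⟨(⟨k + 1, hk1⟩ : Fin N).1 + 1, h⟩ - y.1 ⟨k + 1, hk1⟩)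
          * ((B y).1 ⟨(⟨k + 1, hk1⟩ : Fin N).1 + 1, h⟩ - 0) else 0) = 0 := by
      by_cases h : (⟨k + 1, hk1⟩ : Fin N).1 + 1 < N
      · rw [dif_pos h, hB1 y _ (by simp)]; ring
      · rw [dif_neg h]
    rw [h3]
    rw [hB2 y ⟨k + 1, hk1⟩ (by simp)]
    by_cases h4 : (⟨k + 1, hk1⟩ : Fin N).1 = 0 ∨ (⟨k + 1, hk1⟩ : Fin N).1 = N - 1
    · rw [if_pos h4]; ring
    · rw [if_neg h4]; ring
end props2

lemma sum_shift (j : ℕ) (hj : 1 ≤ j) (F G H : ℕ → ℝ) (bb gb : ℝ) :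
    ∑ n ∈ Finset.range j, F (n+2) * ((if n + 1 < j then G n else 0)
      + (if n = 0 then 0 else -bb * H (n-1)) + (if n = j - 1 then gb else 0))
    = (∑ n ∈ Finset.range (j-1), (F (n+3) * (-bb) * H n + F (n+2) * G n)) + F (j+1) * gb := by
  obtain ⟨m, rfl⟩ : ∃ m, j = m + 1 := ⟨j - 1, by omega⟩
  simp only [Nat.add_sub_cancel]
  have hexp : ∀ n, F (n+2) * ((if n + 1 < m + 1 then G n else 0)
      + (if n = 0 then 0 else -bb * H (n-1)) + (if n = m then gb else 0))
      = F (n+2) * (if n < m then G n else 0) + F (n+2) * (if n = 0 then 0 else -bb * H (n-1))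
        + (if n = m then F (n+2) * gb else 0) := by
    intro n
    simp only [Nat.add_lt_add_iff_right]
    split_ifs <;> ring
  rw [Finset.sum_congr rfl (fun n _ => hexp n), Finset.sum_add_distrib, Finset.sum_add_distrib]
  have hS1 : ∑ n ∈ Finset.range (m+1), F (n+2) * (if n < m then G n else 0)
      = ∑ n ∈ Finset.range m, F (n+2) * G n := by
    rw [Finset.sum_range_succ, if_neg (lt_irrefl m), mul_zero, add_zero]
    refine Finset.sum_congr rfl (fun n hn => ?_)
    rw [if_pos (Finset.mem_range.mp hn)]
  have hS2 : ∑ n ∈ Finset.range (m+1), F (n+2) * (if n = 0 then 0 else -bb * H (n-1))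
      = ∑ n ∈ Finset.range m, F (n+3) * (-bb) * H n := by
    rw [Finset.sum_range_succ']
    have h0 : (if (0:ℕ) = 0 then (0:ℝ) else -bb * H (0-1)) = 0 := if_pos rfl
    rw [h0, mul_zero, add_zero]
    refine Finset.sum_congr rfl (fun n hn => ?_)
    rw [if_neg (Nat.succ_ne_zero n)]
    show F (n+1+2) * (-bb * H n) = F (n+3) * (-bb) * H n
    ring
  have hS3 : ∑ n ∈ Finset.range (m+1), (if n = m then F (n+2) * gb else 0)
      = F (m+2) * gb := by
    rw [Finset.sum_ite_eq' (Finset.range (m+1)) m (fun n => F (n+2) * gb),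
      if_pos (Finset.self_mem_range_succ m)]
  rw [hS1, hS2, hS3, ← Finset.sum_add_distrib]
  refine congrArg₂ (· + ·) ?_ rfl
  exact Finset.sum_congr rfl (fun n _ => by ring)

section psirec
variable {N : ℕ} {U V : ℝ → ℝ} {force : (Fin N → ℝ) → Fin N → ℝ}
  {X₀ : ((Fin N → ℝ) × (Fin N → ℝ)) → ((Fin N → ℝ) × (Fin N → ℝ))}
local notation "EE" => ((Fin N → ℝ) × (Fin N → ℝ))

variable (hUinf : ContDiff ℝ ∞ U) (hV : ContDiff ℝ ∞ (deriv V))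
    (hforce : ∀ q i, force q i = deriv V (q i)
        + (if 1 ≤ i.1 then deriv U (q i - q ⟨i.1 - 1, (by have := i.isLt; omega : i.1 - 1 < N + 0)⟩) else 0)
        - (if h : i.1 + 1 < N then deriv U (q ⟨i.1 + 1, h⟩ - q i) else 0))
    (hX₀ : ∀ x, X₀ x = (x.2, fun i => -force x.1 i
        - (if i.1 = 0 ∨ i.1 = N - 1 then (1/2) * x.2 i else 0)))

include hUinf hV hforce hX₀

lemma psi_rec {S : Set (EE → EE)} {k : ℕ} (hk1 : k + 1 < N)
    {B : EE → EE} (hBG : GenLie X₀ S B) (hBs : ContDiff ℝ ∞ B)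
    (hB1 : ∀ (y : EE) (i : Fin N), k < i.1 → (B y).1 i = 0)
    (hB2 : ∀ (y : EE) (i : Fin N), k < i.1 → (B y).2 i = 0) :
    ∀ j : ℕ, 1 ≤ j → ∃ C : EE → EE, GenLie X₀ S C ∧ ContDiff ℝ ∞ C ∧
      (∀ (y : EE) (i : Fin N), k < i.1 → (C y).1 i = 0) ∧
      (∀ (y : EE) (i : Fin N), k + 1 < i.1 → (C y).2 i = 0) ∧
      ∃ h : ℕ → EE → ℝ, (∀ n, ContDiff ℝ ∞ (h n)) ∧
        ∀ y : EE, (C y).2 ⟨k + 1, hk1⟩ =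
          (-1:ℝ)^j * (iteratedDeriv (j+1) U (y.1 ⟨k + 1, hk1⟩ - y.1 ⟨k, by omega⟩)
            * ((B y).1 ⟨k, by omega⟩)^j)
          + ∑ n ∈ Finset.range (j - 1),
              iteratedDeriv (n+2) U (y.1 ⟨k + 1, hk1⟩ - y.1 ⟨k, by omega⟩) * h n y := by
  have hU : ContDiff ℝ ∞ (deriv U) := (contDiff_infty_iff_deriv.mp hUinf).2
  have hklt : k < N := by omega
  have hIUs : ∀ r : ℕ, ContDiff ℝ ∞ (iteratedDeriv r U) := by
    intro r; rw [iteratedDeriv_eq_iterate]; exact hUinf.iterate_deriv r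
  have hIr : ∀ (r : ℕ) (t : ℝ), HasDerivAt (iteratedDeriv r U) (iteratedDeriv (r+1) U t) t := by
    intro r t
    rw [iteratedDeriv_succ]
    exact (((hIUs r).differentiable hle1inf) t).hasDerivAt
  have hbs : ContDiff ℝ ∞ (fun z : EE => (B z).1 ⟨k, hklt⟩) := (pQ ⟨k, hklt⟩).contDiff.comp hBs
  intro j
  induction j with
  | zero => intro h; omega
  | succ j ih =>
    intro _
    by_cases hj : 1 ≤ j
    · -- inductive step
      obtain ⟨C, hCG, hCs, hC1, hC2, h, hhs, hval⟩ := ih hj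
      obtain ⟨Q1, Q2, Q3⟩ := Cstep hBs hCs hB1 hB2 hC1 hC2
      refine ⟨lieBracketVF B C, GenLie.lie hBG hCG, lieBracketVF_contDiff hBs hCs, Q1, Q2,
        ⟨fun n y =>
          (if n + 1 < j then fderiv ℝ (h n) y (B y) else 0)
          + (if n = 0 then 0 else -((B y).1 ⟨k, hklt⟩) * h (n-1) y)
          + (if n = j - 1 then (-1:ℝ)^j
              * fderiv ℝ (fun z : EE => ((B z).1 ⟨k, hklt⟩)^j) y (B y) else 0), ?_, ?_⟩⟩
      · -- smoothness of h'
        intro n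
        refine ContDiff.add (ContDiff.add ?_ ?_) ?_
        · by_cases hc : n + 1 < j
          · simp only [if_pos hc]
            exact ((hhs n).fderiv_right (by rfl)).clm_apply hBs
          · simp only [if_neg hc]; exact contDiff_const
        · by_cases hc : n = 0
          · simp only [if_pos hc]; exact contDiff_const
          · simp only [if_neg hc]
            exact (hbs.neg.mul (hhs (n-1)))
        · by_cases hc : n = j - 1
          · simp only [if_pos hc]
            exact contDiff_const.mul (((hbs.pow j).fderiv_right (by rfl)).clm_apply hBs)
          · simp only [if_neg hc]; exact contDiff_const
      · -- the value identity
        intro y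
        rw [Q3 y hk1]
        have hψ : (fun z : EE => (C z).2 ⟨k + 1, hk1⟩) = fun z : EE =>
            (-1:ℝ)^j * (iteratedDeriv (j+1) U (z.1 ⟨k + 1, hk1⟩ - z.1 ⟨k, hklt⟩)
              * ((B z).1 ⟨k, hklt⟩)^j)
            + ∑ n ∈ Finset.range (j - 1),
                iteratedDeriv (n+2) U (z.1 ⟨k + 1, hk1⟩ - z.1 ⟨k, hklt⟩) * h n z :=
          funext (fun z => hval z)
        rw [hψ]
        -- build derivative
        have hΔ : HasFDerivAt (fun z : EE => z.1 ⟨k + 1, hk1⟩ - z.1 ⟨k, hklt⟩)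
            (pQ ⟨k + 1, hk1⟩ - pQ ⟨k, hklt⟩) y :=
          (pQ ⟨k + 1, hk1⟩).hasFDerivAt.sub (pQ ⟨k, hklt⟩).hasFDerivAt
        have hFr : ∀ r : ℕ, HasFDerivAt
            (fun z : EE => iteratedDeriv r U (z.1 ⟨k + 1, hk1⟩ - z.1 ⟨k, hklt⟩))
            (iteratedDeriv (r+1) U (y.1 ⟨k + 1, hk1⟩ - y.1 ⟨k, hklt⟩)
              • (pQ ⟨k + 1, hk1⟩ - pQ ⟨k, hklt⟩)) y :=
          fun r => (hIr r _).comp_hasFDerivAt y hΔ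
        have hPd : HasFDerivAt (fun z : EE => ((B z).1 ⟨k, hklt⟩)^j)
            (fderiv ℝ (fun z : EE => ((B z).1 ⟨k, hklt⟩)^j) y) y :=
          (((hbs.pow j).differentiable hle1inf) y).hasFDerivAt
        have hhd : ∀ n, HasFDerivAt (h n) (fderiv ℝ (h n) y) y :=
          fun n => (((hhs n).differentiable hle1inf) y).hasFDerivAt
        have hc : HasFDerivAt (fun z : EE =>
            (-1:ℝ)^j * (iteratedDeriv (j+1) U (z.1 ⟨k + 1, hk1⟩ - z.1 ⟨k, hklt⟩)
              * ((B z).1 ⟨k, hklt⟩)^j)) _ y := ((hFr (j+1)).mul hPd).const_mul ((-1:ℝ)^j)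
        have hsum : HasFDerivAt (fun z : EE => ∑ n ∈ Finset.range (j - 1),
            iteratedDeriv (n+2) U (z.1 ⟨k + 1, hk1⟩ - z.1 ⟨k, hklt⟩) * h n z)
            (∑ n ∈ Finset.range (j - 1),
              (iteratedDeriv (n+2) U (y.1 ⟨k + 1, hk1⟩ - y.1 ⟨k, hklt⟩) • fderiv ℝ (h n) y
                + h n y • (iteratedDeriv (n+3) U (y.1 ⟨k + 1, hk1⟩ - y.1 ⟨k, hklt⟩)
                  • (pQ ⟨k + 1, hk1⟩ - pQ ⟨k, hklt⟩)))) y := by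
          refine HasFDerivAt.fun_sum (fun n _ => ?_)
          exact (hFr (n+2)).mul (hhd n)
        have H := hc.add hsum
        erw [H.fderiv]
        -- evaluate
        simp only [ContinuousLinearMap.add_apply, ContinuousLinearMap.smul_apply,
          ContinuousLinearMap.coe_sum', Finset.sum_apply, ContinuousLinearMap.sub_apply,
          pQ_apply, smul_eq_mul]
        -- target sum via sum_shift
        rw [show (j + 1 - 1) = j from rfl]
        rw [sum_shift j hj
          (fun r => iteratedDeriv r U (y.1 ⟨k + 1, hk1⟩ - y.1 ⟨k, by omega⟩))
          (fun n => fderiv ℝ (h n) y (B y)) (fun n => h n y)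
          ((B y).1 ⟨k, hklt⟩)
          ((-1:ℝ)^j * fderiv ℝ (fun z : EE => ((B z).1 ⟨k, hklt⟩)^j) y (B y))]
        rw [hB1 y ⟨k + 1, hk1⟩ (Nat.lt_succ_self k)]
        rw [Finset.sum_congr rfl (fun n _ => by ring :
          ∀ n ∈ Finset.range (j - 1),
            iteratedDeriv (n+2) U (y.1 ⟨k + 1, hk1⟩ - y.1 ⟨k, hklt⟩) * fderiv ℝ (h n) y (B y)
              + h n y * (iteratedDeriv (n+3) U (y.1 ⟨k + 1, hk1⟩ - y.1 ⟨k, hklt⟩)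
                * ((0:ℝ) - (B y).1 ⟨k, hklt⟩))
            = iteratedDeriv (n+3) U (y.1 ⟨k + 1, hk1⟩ - y.1 ⟨k, hklt⟩)
                * (-(B y).1 ⟨k, hklt⟩) * h n y
              + iteratedDeriv (n+2) U (y.1 ⟨k + 1, hk1⟩ - y.1 ⟨k, hklt⟩)
                * fderiv ℝ (h n) y (B y))]
        ring
    · -- base case j = 0, so we construct for j+1 = 1
      have hj0 : j = 0 := by omega
      subst hj0
      obtain ⟨P1, P2, P3⟩ := Cfirst hU hV hforce hX₀ hk1 hBs hB1 hB2
      refine ⟨lieBracketVF X₀ B, GenLie.lie₀ hBG,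
        lieBracketVF_contDiff (X0_contDiff hU hV hforce hX₀) hBs, P1, P2,
        ⟨fun _ _ => 0, fun _ => contDiff_const, ?_⟩⟩
      intro y
      rw [P3 y]
      simp [pow_one]
end psirec

section keysec
variable {N : ℕ} {U V : ℝ → ℝ} {force : (Fin N → ℝ) → Fin N → ℝ}
  {X₀ X₁ Xₙ : ((Fin N → ℝ) × (Fin N → ℝ)) → ((Fin N → ℝ) × (Fin N → ℝ))}
local notation "EE" => ((Fin N → ℝ) × (Fin N → ℝ))

variable (hN : 2 ≤ N) (hUinf : ContDiff ℝ ∞ U) (hV : ContDiff ℝ ∞ (deriv V))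
    (hnd : ∀ q : ℝ, ∃ m, 2 ≤ m ∧ iteratedDeriv m U q ≠ 0)
    (hforce : ∀ q i, force q i = deriv V (q i)
        + (if 1 ≤ i.1 then deriv U (q i - q ⟨i.1 - 1, (by have := i.isLt; omega : i.1 - 1 < N + 0)⟩) else 0)
        - (if h : i.1 + 1 < N then deriv U (q ⟨i.1 + 1, h⟩ - q i) else 0))
    (hX₀ : ∀ x, X₀ x = (x.2, fun i => -force x.1 i
        - (if i.1 = 0 ∨ i.1 = N - 1 then (1/2) * x.2 i else 0)))
    (hX₁ : ∀ x, X₁ x = (0, Pi.single (⟨0, (by omega : 0 < N + 0)⟩ : Fin N) 1))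

include hN hUinf hV hnd hforce hX₀ hX₁

lemma key (xs : EE) : ∀ k : ℕ, ∀ hk : k < N, ∃ A : EE → EE,
    GenLie X₀ {X₁, Xₙ} A ∧ ContDiff ℝ ∞ A ∧
    (∀ (y : EE) (i : Fin N), k ≤ i.1 → (A y).1 i = 0) ∧
    (∀ (y : EE) (i : Fin N), k < i.1 → (A y).2 i = 0) ∧
    (A xs).2 ⟨k, hk⟩ ≠ 0 := by
  have hU : ContDiff ℝ ∞ (deriv U) := (contDiff_infty_iff_deriv.mp hUinf).2
  intro k
  induction k with
  | zero =>
    intro hk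
    have hX₁eq : X₁ = fun _ : EE => ((0 : Fin N → ℝ), Pi.single (⟨0, (by omega : 0 < N + 0)⟩ : Fin N) 1) :=
      funext hX₁
    refine ⟨X₁, GenLie.base (Set.mem_insert _ _), by rw [hX₁eq]; exact contDiff_const,
      ?_, ?_, ?_⟩
    · intro y i _
      rw [hX₁ y]
      rfl
    · intro y i hi
      rw [hX₁ y]
      simp only [Pi.single_apply, Fin.ext_iff]
      rw [if_neg]
      omega
    · rw [hX₁ xs]
      simp [Pi.single_apply, Fin.ext_iff]
  | succ k ih =>
    intro hk1
    have hklt : k < N := by omega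
    obtain ⟨A, hAG, hAs, hA1, hA2, hAne⟩ := ih hklt
    obtain ⟨B1, B1k, B2⟩ := Bprops hU hV hforce hX₀ hklt hAs hA1 hA2
    have hBG : GenLie X₀ {X₁, Xₙ} (lieBracketVF X₀ A) := GenLie.lie₀ hAG
    have hBs : ContDiff ℝ ∞ (lieBracketVF X₀ A) :=
      lieBracketVF_contDiff (X0_contDiff hU hV hforce hX₀) hAs
    -- nondegeneracy at the point
    set Δ : ℝ := xs.1 ⟨k + 1, hk1⟩ - xs.1 ⟨k, hklt⟩ with hΔdef
    have hex : ∃ m, 2 ≤ m ∧ iteratedDeriv m U Δ ≠ 0 := hnd Δ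
    classical
    let m := Nat.find hex
    have hm : 2 ≤ m ∧ iteratedDeriv m U Δ ≠ 0 := Nat.find_spec hex
    have hmin : ∀ i, 2 ≤ i → i < m → iteratedDeriv i U Δ = 0 := by
      intro i h2 him
      by_contra hne
      exact (Nat.find_min hex him) ⟨h2, hne⟩
    have hj : 1 ≤ m - 1 := by omega
    obtain ⟨C, hCG, hCs, hC1, hC2, h, hhs, hval⟩ :=
      psi_rec hUinf hV hforce hX₀ hk1 hBG hBs B1 B2 (m - 1) hj
    refine ⟨C, hCG, hCs, ?_, ?_, ?_⟩
    · intro y i hi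
      exact hC1 y i (by omega)
    · intro y i hi
      exact hC2 y i (by omega)
    · rw [hval xs]
      have hsum0 : ∑ n ∈ Finset.range (m - 1 - 1),
          iteratedDeriv (n+2) U (xs.1 ⟨k + 1, hk1⟩ - xs.1 ⟨k, by omega⟩) * h n xs = 0 := by
        refine Finset.sum_eq_zero (fun n hn => ?_)
        have hn' := Finset.mem_range.mp hn
        rw [show (xs.1 ⟨k + 1, hk1⟩ - xs.1 ⟨k, by omega⟩) = Δ from rfl]
        rw [hmin (n+2) (by omega) (by omega)]
        ring
      rw [hsum0, add_zero]
      rw [show (m - 1 + 1) = m from by omega]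
      rw [show (xs.1 ⟨k + 1, hk1⟩ - xs.1 ⟨k, by omega⟩) = Δ from rfl]
      refine mul_ne_zero (pow_ne_zero _ (by norm_num : (-1:ℝ) ≠ 0)) (mul_ne_zero hm.2 ?_)
      refine pow_ne_zero _ ?_
      rw [B1k xs]
      exact neg_ne_zero.mpr hAne
end keysec

lemma filter_single_sum {N : ℕ} (k : ℕ) (c : Fin N → ℝ) (j : Fin N) :
    (∑ i ∈ Finset.univ.filter (fun i : Fin N => i.1 < k),
        (Pi.single i (c i) : Fin N → ℝ)) j
      = if j.1 < k then c j else 0 := by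
  rw [Finset.sum_apply]
  have hterm : ∀ i ∈ Finset.univ.filter (fun i : Fin N => i.1 < k),
      (Pi.single i (c i) : Fin N → ℝ) j = if j = i then c i else 0 := by
    intro i _; rw [Pi.single_apply]
  rw [Finset.sum_congr rfl hterm, Finset.sum_ite_eq]
  simp [Finset.mem_filter]

lemma smul_single_one {N : ℕ} (c : ℝ) (i : Fin N) :
    c • (Pi.single i (1:ℝ) : Fin N → ℝ) = (Pi.single i c : Fin N → ℝ) := by
  funext j
  simp [Pi.single_apply, mul_ite]


/-- Hörmander's condition for the oscillator chain: the Lie algebra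
generated by `∂_{p_1}, ∂_{p_N}` and iterated brackets with the drift `X₀` has full
rank `2N` at every point, provided the interaction potential `U` is non-degenerate. -/
theorem stmt13 (N : ℕ) (hN : 2 ≤ N) (U V : ℝ → ℝ)
    (hU : ContDiff ℝ (⊤ : ℕ∞) U) (hV : ContDiff ℝ (⊤ : ℕ∞) V)
    (hnd : ∀ q : ℝ, ∃ m, 2 ≤ m ∧ iteratedDeriv m U q ≠ 0)
    (force : (Fin N → ℝ) → Fin N → ℝ)
    (hforce : ∀ q i, force q i = deriv V (q i)
        + (if 1 ≤ i.1 then deriv U (q i - q ⟨i.1 - 1, by have := i.isLt; omega⟩) else 0)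
        - (if h : i.1 + 1 < N then deriv U (q ⟨i.1 + 1, h⟩ - q i) else 0))
    (X₀ X₁ Xₙ : ((Fin N → ℝ) × (Fin N → ℝ)) → ((Fin N → ℝ) × (Fin N → ℝ)))
    (hX₀ : ∀ x, X₀ x = (x.2, fun i => -force x.1 i
        - (if i.1 = 0 ∨ i.1 = N - 1 then (1/2) * x.2 i else 0)))
    (hX₁ : ∀ x, X₁ x = (0, Pi.single (⟨0, by omega⟩ : Fin N) 1))
    (hXₙ : ∀ x, Xₙ x = (0, Pi.single (⟨N - 1, by omega⟩ : Fin N) 1)) :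
    ∀ x : (Fin N → ℝ) × (Fin N → ℝ),
      Submodule.span ℝ {v | ∃ f, GenLie X₀ {X₁, Xₙ} f ∧ f x = v}
        = (⊤ : Submodule ℝ ((Fin N → ℝ) × (Fin N → ℝ))) := by
  intro xs
  classical
  have hUinf : ContDiff ℝ ∞ U := hU.of_le (by simp)
  have hVinf : ContDiff ℝ ∞ V := hV.of_le (by simp)
  have hU' : ContDiff ℝ ∞ (deriv U) := (contDiff_infty_iff_deriv.mp hUinf).2
  have hV' : ContDiff ℝ ∞ (deriv V) := (contDiff_infty_iff_deriv.mp hVinf).2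
  set SS : Set (((Fin N → ℝ) × (Fin N → ℝ)) → ((Fin N → ℝ) × (Fin N → ℝ))) := {X₁, Xₙ} with hSS
  set Sp : Set ((Fin N → ℝ) × (Fin N → ℝ)) := {v | ∃ f, GenLie X₀ SS f ∧ f xs = v} with hSp
  have hkey := key (Xₙ := Xₙ) hN hUinf hV' hnd hforce hX₀ hX₁ xs
  -- main membership claim
  have main : ∀ k : ℕ, ∀ i : Fin N, i.1 = k →
      ((Pi.single i (1:ℝ), (0 : Fin N → ℝ)) ∈ Submodule.span ℝ Sp
        ∧ ((0 : Fin N → ℝ), Pi.single i (1:ℝ)) ∈ Submodule.span ℝ Sp) := by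
    intro k
    induction k using Nat.strong_induction_on with
    | _ k IH =>
    intro i hik
    have hk : k < N := hik ▸ i.isLt
    obtain rfl : i = ⟨k, hk⟩ := Fin.ext hik
    obtain ⟨A, hAG, hAs, hA1, hA2, hAne⟩ := hkey k hk
    obtain ⟨B1, B1k, B2⟩ := Bprops hU' hV' hforce hX₀ hk hAs hA1 hA2
    set u := A xs with hu
    set v := lieBracketVF X₀ A xs with hv
    have hus : u ∈ Sp := ⟨A, hAG, rfl⟩
    have hvs : v ∈ Sp := ⟨lieBracketVF X₀ A, GenLie.lie₀ hAG, rfl⟩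
    have huS : u ∈ Submodule.span ℝ Sp := Submodule.subset_span hus
    have hvS : v ∈ Submodule.span ℝ Sp := Submodule.subset_span hvs
    -- lower singles in span
    have hlow : ∀ j : Fin N, j.1 < k →
        ((Pi.single j (1:ℝ), (0 : Fin N → ℝ)) ∈ Submodule.span ℝ Sp
          ∧ ((0 : Fin N → ℝ), Pi.single j (1:ℝ)) ∈ Submodule.span ℝ Sp) :=
      fun j hj => IH j.1 hj j rfl
    -- corrections
    have hcu : (∑ j ∈ Finset.univ.filter (fun j : Fin N => j.1 < k),
        (u.1 j • (((Pi.single j (1:ℝ) : Fin N → ℝ), (0 : Fin N → ℝ)) : (Fin N → ℝ) × (Fin N → ℝ))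
          + u.2 j • (((0 : Fin N → ℝ), (Pi.single j (1:ℝ) : Fin N → ℝ)) : (Fin N → ℝ) × (Fin N → ℝ))))
        ∈ Submodule.span ℝ Sp := by
      refine Submodule.sum_mem _ (fun j hj => ?_)
      have hj' := (Finset.mem_filter.mp hj).2
      exact Submodule.add_mem _ (Submodule.smul_mem _ _ (hlow j hj').1)
        (Submodule.smul_mem _ _ (hlow j hj').2)
    -- u minus correction
    have hueq : u - (∑ j ∈ Finset.univ.filter (fun j : Fin N => j.1 < k),
        (u.1 j • (((Pi.single j (1:ℝ) : Fin N → ℝ), (0 : Fin N → ℝ)) : (Fin N → ℝ) × (Fin N → ℝ))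
          + u.2 j • (((0 : Fin N → ℝ), (Pi.single j (1:ℝ) : Fin N → ℝ)) : (Fin N → ℝ) × (Fin N → ℝ))))
        = u.2 ⟨k, hk⟩ • ((((0 : Fin N → ℝ), (Pi.single (⟨k, hk⟩ : Fin N) (1:ℝ) : Fin N → ℝ)) : (Fin N → ℝ) × (Fin N → ℝ))) := by
      have hsum : (∑ j ∈ Finset.univ.filter (fun j : Fin N => j.1 < k),
          (u.1 j • (((Pi.single j (1:ℝ) : Fin N → ℝ), (0 : Fin N → ℝ)) : (Fin N → ℝ) × (Fin N → ℝ))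
            + u.2 j • (((0 : Fin N → ℝ), (Pi.single j (1:ℝ) : Fin N → ℝ)) : (Fin N → ℝ) × (Fin N → ℝ))))
          = (∑ j ∈ Finset.univ.filter (fun j : Fin N => j.1 < k), Pi.single j (u.1 j),
             ∑ j ∈ Finset.univ.filter (fun j : Fin N => j.1 < k), Pi.single j (u.2 j)) := by
        rw [Prod.ext_iff]
        constructor
        · rw [Prod.fst_sum]
          refine Finset.sum_congr rfl (fun j _ => ?_)
          simp [smul_single_one]
        · rw [Prod.snd_sum]
          refine Finset.sum_congr rfl (fun j _ => ?_)
          simp [smul_single_one]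
      rw [hsum, Prod.ext_iff]
      constructor
      · show u.1 - _ = _
        funext j
        simp only [Prod.smul_mk, smul_zero, Pi.sub_apply, filter_single_sum]
        split_ifs with h1
        · simp
        · rw [hA1 xs j (by omega)]
          simp
      · show u.2 - _ = u.2 ⟨k, hk⟩ • (Pi.single (⟨k, hk⟩ : Fin N) (1:ℝ) : Fin N → ℝ)
        funext j
        rw [smul_single_one]
        simp only [Pi.sub_apply, filter_single_sum, Pi.single_apply]
        split_ifs with h1 h2 h3
        · subst h2; simp at h1
        · ring
        · subst h3; ring
        · have hjgt : k < j.1 := by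
            have : j.1 ≠ k := fun h => h3 (Fin.ext h)
            omega
          rw [hA2 xs j hjgt]
          ring
    have hEp : ((((0 : Fin N → ℝ), (Pi.single (⟨k, hk⟩ : Fin N) (1:ℝ) : Fin N → ℝ)) : (Fin N → ℝ) × (Fin N → ℝ)))
        ∈ Submodule.span ℝ Sp := by
      have heq : ((((0 : Fin N → ℝ), (Pi.single (⟨k, hk⟩ : Fin N) (1:ℝ) : Fin N → ℝ)) : (Fin N → ℝ) × (Fin N → ℝ)))
          = (u.2 ⟨k, hk⟩)⁻¹ • (u - (∑ j ∈ Finset.univ.filter (fun j : Fin N => j.1 < k),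
            (u.1 j • (((Pi.single j (1:ℝ) : Fin N → ℝ), (0 : Fin N → ℝ)) : (Fin N → ℝ) × (Fin N → ℝ))
              + u.2 j • (((0 : Fin N → ℝ), (Pi.single j (1:ℝ) : Fin N → ℝ)) : (Fin N → ℝ) × (Fin N → ℝ))))) := by
        rw [hueq, smul_smul, inv_mul_cancel₀ hAne, one_smul]
      rw [heq]
      exact Submodule.smul_mem _ _ (Submodule.sub_mem _ huS hcu)
    -- now the q-direction
    have hcv : ((∑ j ∈ Finset.univ.filter (fun j : Fin N => j.1 < k),
        (v.1 j • (((Pi.single j (1:ℝ) : Fin N → ℝ), (0 : Fin N → ℝ)) : (Fin N → ℝ) × (Fin N → ℝ))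
          + v.2 j • (((0 : Fin N → ℝ), (Pi.single j (1:ℝ) : Fin N → ℝ)) : (Fin N → ℝ) × (Fin N → ℝ))))
        + v.2 ⟨k, hk⟩ • ((((0 : Fin N → ℝ), (Pi.single (⟨k, hk⟩ : Fin N) (1:ℝ) : Fin N → ℝ)) : (Fin N → ℝ) × (Fin N → ℝ))))
        ∈ Submodule.span ℝ Sp := by
      refine Submodule.add_mem _ ?_ (Submodule.smul_mem _ _ hEp)
      refine Submodule.sum_mem _ (fun j hj => ?_)
      have hj' := (Finset.mem_filter.mp hj).2
      exact Submodule.add_mem _ (Submodule.smul_mem _ _ (hlow j hj').1)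
        (Submodule.smul_mem _ _ (hlow j hj').2)
    have hveq : v - ((∑ j ∈ Finset.univ.filter (fun j : Fin N => j.1 < k),
        (v.1 j • (((Pi.single j (1:ℝ) : Fin N → ℝ), (0 : Fin N → ℝ)) : (Fin N → ℝ) × (Fin N → ℝ))
          + v.2 j • (((0 : Fin N → ℝ), (Pi.single j (1:ℝ) : Fin N → ℝ)) : (Fin N → ℝ) × (Fin N → ℝ))))
        + v.2 ⟨k, hk⟩ • ((((0 : Fin N → ℝ), (Pi.single (⟨k, hk⟩ : Fin N) (1:ℝ) : Fin N → ℝ)) : (Fin N → ℝ) × (Fin N → ℝ))))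
        = v.1 ⟨k, hk⟩ • ((((Pi.single (⟨k, hk⟩ : Fin N) (1:ℝ)) : Fin N → ℝ), (0 : Fin N → ℝ)) : (Fin N → ℝ) × (Fin N → ℝ)) := by
      have hsum : (∑ j ∈ Finset.univ.filter (fun j : Fin N => j.1 < k),
          (v.1 j • (((Pi.single j (1:ℝ) : Fin N → ℝ), (0 : Fin N → ℝ)) : (Fin N → ℝ) × (Fin N → ℝ))
            + v.2 j • (((0 : Fin N → ℝ), (Pi.single j (1:ℝ) : Fin N → ℝ)) : (Fin N → ℝ) × (Fin N → ℝ))))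
          = (∑ j ∈ Finset.univ.filter (fun j : Fin N => j.1 < k), Pi.single j (v.1 j),
             ∑ j ∈ Finset.univ.filter (fun j : Fin N => j.1 < k), Pi.single j (v.2 j)) := by
        rw [Prod.ext_iff]
        constructor
        · rw [Prod.fst_sum]
          refine Finset.sum_congr rfl (fun j _ => ?_)
          simp [smul_single_one]
        · rw [Prod.snd_sum]
          refine Finset.sum_congr rfl (fun j _ => ?_)
          simp [smul_single_one]
      rw [hsum, Prod.ext_iff]
      constructor
      · show v.1 - _ = v.1 ⟨k, hk⟩ • (Pi.single (⟨k, hk⟩ : Fin N) (1:ℝ) : Fin N → ℝ)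
        funext j
        rw [smul_single_one]
        simp only [Prod.fst_add, Prod.smul_mk, smul_zero, Pi.add_apply, Pi.zero_apply,
          Pi.sub_apply, filter_single_sum, Pi.single_apply, add_zero]
        split_ifs with h1 h2 h3
        · subst h2; simp at h1
        · ring
        · subst h3; ring
        · have hjgt : k < j.1 := by
            have : j.1 ≠ k := fun h => h3 (Fin.ext h)
            omega
          have hB10 : v.1 j = 0 := by rw [hv]; exact B1 xs j hjgt
          rw [hB10]
          ring
      · show v.2 - _ = _
        funext j
        simp only [Prod.snd_add, Prod.smul_mk, smul_zero, Pi.add_apply, Pi.zero_apply,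
          Pi.sub_apply, filter_single_sum]
        rw [smul_single_one]
        simp only [Pi.single_apply]
        split_ifs with h1 h2 h3
        · subst h2; simp at h1
        · ring
        · subst h3; ring
        · have hjgt : k < j.1 := by
            have : j.1 ≠ k := fun h => h3 (Fin.ext h)
            omega
          have hB20 : v.2 j = 0 := by rw [hv]; exact B2 xs j hjgt
          rw [hB20]
          ring
    have hvne : v.1 ⟨k, hk⟩ ≠ 0 := by
      rw [B1k xs]
      exact neg_ne_zero.mpr hAne
    have hEq : ((((Pi.single (⟨k, hk⟩ : Fin N) (1:ℝ)) : Fin N → ℝ), (0 : Fin N → ℝ)) : (Fin N → ℝ) × (Fin N → ℝ))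
        ∈ Submodule.span ℝ Sp := by
      have heq : ((((Pi.single (⟨k, hk⟩ : Fin N) (1:ℝ)) : Fin N → ℝ), (0 : Fin N → ℝ)) : (Fin N → ℝ) × (Fin N → ℝ))
          = (v.1 ⟨k, hk⟩)⁻¹ • (v - ((∑ j ∈ Finset.univ.filter (fun j : Fin N => j.1 < k),
            (v.1 j • (((Pi.single j (1:ℝ) : Fin N → ℝ), (0 : Fin N → ℝ)) : (Fin N → ℝ) × (Fin N → ℝ))
              + v.2 j • (((0 : Fin N → ℝ), (Pi.single j (1:ℝ) : Fin N → ℝ)) : (Fin N → ℝ) × (Fin N → ℝ))))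
            + v.2 ⟨k, hk⟩ • ((((0 : Fin N → ℝ), (Pi.single (⟨k, hk⟩ : Fin N) (1:ℝ) : Fin N → ℝ)) : (Fin N → ℝ) × (Fin N → ℝ))))) := by
        rw [hveq, smul_smul, inv_mul_cancel₀ hvne, one_smul]
      rw [heq]
      exact Submodule.smul_mem _ _ (Submodule.sub_mem _ hvS hcv)
    exact ⟨hEq, hEp⟩
  -- conclude: the span is everything
  rw [eq_top_iff]
  rintro z -
  have hz : z = (∑ i : Fin N, z.1 i • (((Pi.single i (1:ℝ) : Fin N → ℝ), (0 : Fin N → ℝ)) : (Fin N → ℝ) × (Fin N → ℝ)))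
      + ∑ i : Fin N, z.2 i • (((0 : Fin N → ℝ), (Pi.single i (1:ℝ) : Fin N → ℝ)) : (Fin N → ℝ) × (Fin N → ℝ)) := by
    rw [Prod.ext_iff]
    constructor
    · rw [Prod.fst_add, Prod.fst_sum, Prod.fst_sum]
      have h1 : ∀ i : Fin N, (z.1 i • (((Pi.single i (1:ℝ) : Fin N → ℝ), (0 : Fin N → ℝ)) : (Fin N → ℝ) × (Fin N → ℝ))).1
          = Pi.single i (z.1 i) := by
        intro i; simp [smul_single_one]
      have h2 : ∀ i : Fin N, (z.2 i • (((0 : Fin N → ℝ), (Pi.single i (1:ℝ) : Fin N → ℝ)) : (Fin N → ℝ) × (Fin N → ℝ))).1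
          = (0 : Fin N → ℝ) := by
        intro i; simp
      rw [Finset.sum_congr rfl (fun i _ => h1 i), Finset.sum_congr rfl (fun i _ => h2 i)]
      simp [Finset.univ_sum_single]
    · rw [Prod.snd_add, Prod.snd_sum, Prod.snd_sum]
      have h1 : ∀ i : Fin N, (z.1 i • (((Pi.single i (1:ℝ) : Fin N → ℝ), (0 : Fin N → ℝ)) : (Fin N → ℝ) × (Fin N → ℝ))).2
          = (0 : Fin N → ℝ) := by
        intro i; simp
      have h2 : ∀ i : Fin N, (z.2 i • (((0 : Fin N → ℝ), (Pi.single i (1:ℝ) : Fin N → ℝ)) : (Fin N → ℝ) × (Fin N → ℝ))).2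
          = Pi.single i (z.2 i) := by
        intro i; simp [smul_single_one]
      rw [Finset.sum_congr rfl (fun i _ => h1 i), Finset.sum_congr rfl (fun i _ => h2 i)]
      simp [Finset.univ_sum_single]
  rw [hz]
  refine Submodule.add_mem _ ?_ ?_
  · exact Submodule.sum_mem _ (fun i _ => Submodule.smul_mem _ _ (main i.1 i rfl).1)
  · exact Submodule.sum_mem _ (fun i _ => Submodule.smul_mem _ _ (main i.1 i rfl).2)
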